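/- Let V be a finite-dimensional real inner product space, b ∈ V with ‖b‖ = 1, g ∈ ℝ with |g| < 2, h = √(1 − g²/4), and let q, v, A, B, t, λ be as in the Finsleroid setting; for y with q(y) > 0 put β_y(w) = ⟨b,w⟩ + (g/2)⟨v(y),w⟩/q(y). Then for y₁, y₂ with q(y₁) > 0 and q(y₂) > 0, the mixed second derivative of λ (first in the first argument, then in the second) at (y₁,y₂), applied to (w₁, w₂), equals [β_{y₁}(w₁)β_{y₂}(w₂) + h²(⟨w₁,w₂⟩ − ⟨b,w₁⟩⟨b,w₂⟩)]/√(B(y₁)B(y₂)) − (β_{y₁}(w₁)A(y₂) + h²⟨v(y₂),w₁⟩)·⟨t(y₂),w₂⟩/(B(y₂)√(B(y₁)B(y₂))) − (⟨t(y₁),w₁⟩/B(y₁))·[(β_{y₂}(w₂)A(y₁) + h²⟨v(y₁),w₂⟩)/√(B(y₁)B(y₂)) − λ(y₁,y₂)⟨t(y₂),w₂⟩/B(y₂)]. -/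

import Mathlib

/-!
`λ(y, z) = N(y, z) / (√B(y) · √B(z))` with `N(y, z) = A(y) A(z) + h² (⟨y,z⟩ - ⟨b,y⟩⟨b,z⟩)`.
For any quotient of this shape the mixed derivative follows from the product rule applied twice,
provided the partial derivative `∂_y N(y₁, z)` is differentiable in `z` as a map into the dual.
Here `∂_y N(y₁, z) = A(z) β_{y₁} + h² ⟨v(z), ·⟩` because `dA_y = β_y`, and its derivative in `z`
is `w₂ ↦ β_{y₂}(w₂) β_{y₁} + h² ⟨v(w₂), ·⟩`. The vector `t(y)` enters through
`dB_y = 2 ⟨t(y), ·⟩`, i.e. `d√B / √B = ⟨t(y), ·⟩ / B(y)`.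
-/

open scoped InnerProductSpace
open Filter Topology

section MixedDerivative

variable {𝕜 E F G : Type*} [NontriviallyNormedField 𝕜] [NormedAddCommGroup E] [NormedSpace 𝕜 E]
  [NormedAddCommGroup F] [NormedSpace 𝕜 F] [NormedAddCommGroup G] [NormedSpace 𝕜 G]

theorem fderiv_fderiv_congr_of_eventually {f f' : E → F → G} {y₀ : E} {z₀ : F}
    (h : ∀ᶠ z in 𝓝 z₀, ∀ᶠ y in 𝓝 y₀, f y z = f' y z) :
    fderiv 𝕜 (fun z => fderiv 𝕜 (fun y => f y z) y₀) z₀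
      = fderiv 𝕜 (fun z => fderiv 𝕜 (fun y => f' y z) y₀) z₀ :=
  Filter.EventuallyEq.fderiv_eq (h.mono fun _ hz => Filter.EventuallyEq.fderiv_eq hz)

theorem fderiv_fderiv_div_mul_apply {N : E → F → 𝕜} {S : E → 𝕜} {T : F → 𝕜} {y₀ : E} {z₀ : F}
    {N₁ : F → E →L[𝕜] 𝕜} {N₁₂ : F →L[𝕜] E →L[𝕜] 𝕜} {N₂ τ : F →L[𝕜] 𝕜} {σ : E →L[𝕜] 𝕜}
    (hN₁ : ∀ᶠ z in 𝓝 z₀, HasFDerivAt (N · z) (N₁ z) y₀) (hN₁₂ : HasFDerivAt N₁ N₁₂ z₀)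
    (hN₂ : HasFDerivAt (N y₀) N₂ z₀) (hS : HasFDerivAt S (S y₀ • σ) y₀)
    (hT : HasFDerivAt T (T z₀ • τ) z₀) (hS₀ : S y₀ ≠ 0) (hT₀ : T z₀ ≠ 0) (w₁ : E) (w₂ : F) :
    fderiv 𝕜 (fun z => fderiv 𝕜 (fun y => N y z / (S y * T z)) y₀) z₀ w₂ w₁
      = N₁₂ w₂ w₁ / (S y₀ * T z₀) - N₁ z₀ w₁ * τ w₂ / (S y₀ * T z₀)
        - σ w₁ * (N₂ w₂ / (S y₀ * T z₀) - N y₀ z₀ / (S y₀ * T z₀) * τ w₂) := by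
  let D : F → E →L[𝕜] 𝕜 := fun z => (T z)⁻¹ • ((S y₀)⁻¹ • N₁ z - (N y₀ z * (S y₀)⁻¹) • σ)
  have hS_inv := (hasDerivAt_inv hS₀).comp_hasFDerivAt y₀ hS
  have hT_inv := (hasDerivAt_inv hT₀).comp_hasFDerivAt z₀ hT
  have hD : ∀ᶠ z in 𝓝 z₀, HasFDerivAt (fun y => N y z / (S y * T z)) (D z) y₀ := by
    filter_upwards [hN₁] with z hz
    have hfun : (fun y => N y z / (S y * T z)) = fun y => (N y z * (S y)⁻¹) * (T z)⁻¹ := by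
      funext y; rw [div_eq_mul_inv, mul_inv, mul_assoc]
    rw [hfun]
    refine ((hz.mul hS_inv).mul_const _).congr_fderiv ?_
    ext w
    simp only [D, Function.comp_apply, smul_add, add_apply, smul_apply, sub_apply, smul_eq_mul,
      neg_mul, mul_neg]
    field_simp
    ring
  have hD' : HasFDerivAt D _ z₀ := hT_inv.smul ((hN₁₂.const_smul (S y₀)⁻¹).sub
    ((hN₂.mul_const (S y₀)⁻¹).smul_const σ))
  rw [Filter.EventuallyEq.fderiv_eq (hD.mono fun _ hz => hz.fderiv), hD'.fderiv]
  simp only [Function.comp_apply, add_apply, smul_apply, sub_apply,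
    ContinuousLinearMap.smulRight_apply, smul_eq_mul, neg_mul, neg_smul, neg_apply]
  field_simp
  ring

end MixedDerivative

namespace Finsleroid

variable {V : Type*} [NormedAddCommGroup V] [InnerProductSpace ℝ V] {b : V} {g : ℝ}

variable (b) in
noncomputable def q (y : V) : ℝ := √(‖y‖ ^ 2 - ⟪b, y⟫_ℝ ^ 2)

variable (b) in
def v (y : V) : V := y - ⟪b, y⟫_ℝ • b

variable (b g) in
noncomputable def A (y : V) : ℝ := ⟪b, y⟫_ℝ + (g / 2) * q b y

variable (b g) in
noncomputable def B (y : V) : ℝ := ⟪b, y⟫_ℝ ^ 2 + g * ⟪b, y⟫_ℝ * q b y + q b y ^ 2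

variable (b g) in
noncomputable def t (y : V) : V := y + (g / 2) • (q b y • b + (⟪b, y⟫_ℝ / q b y) • v b y)

variable (b) in
/-- `(innerSL ℝ).flip` rather than `innerSL ℝ`: the latter is conjugate-linear in its first
argument (linear over `ℝ` only up to unfolding `starRingEnd ℝ`), so the difference would not
elaborate. -/
noncomputable def transverseInner : V →L[ℝ] V →L[ℝ] ℝ :=
  (innerSL ℝ).flip - (innerSL ℝ b).smulRight (innerSL ℝ b)

variable (b g) in
noncomputable def beta (y : V) : V →L[ℝ] ℝ := innerSL ℝ b + (g / 2 / q b y) • transverseInner b y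

variable (b g) in
noncomputable def N (h : ℝ) (y z : V) : ℝ :=
  A b g y * A b g z + h ^ 2 * (⟪y, z⟫_ℝ - ⟪b, y⟫_ℝ * ⟪b, z⟫_ℝ)

theorem transverseInner_apply (y w : V) :
    transverseInner b y w = ⟪y, w⟫_ℝ - ⟪b, y⟫_ℝ * ⟪b, w⟫_ℝ := by
  simp only [transverseInner, flip_innerSL_real, sub_apply, ContinuousLinearMap.smulRight_apply]
  rfl

theorem inner_v_left (y w : V) : ⟪v b y, w⟫_ℝ = ⟪y, w⟫_ℝ - ⟪b, y⟫_ℝ * ⟪b, w⟫_ℝ := by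
  simp [v, inner_sub_left, real_inner_smul_left]

theorem beta_apply (y w : V) : beta b g y w = ⟪b, w⟫_ℝ + (g / 2) * ⟪v b y, w⟫_ℝ / q b y := by
  simp only [beta, add_apply, smul_apply, smul_eq_mul, coe_innerSL_apply, transverseInner_apply,
    inner_v_left]
  ring

theorem ne_zero_of_q_pos {y : V} (hy : 0 < q b y) : y ≠ 0 := by
  rintro rfl
  simp [q] at hy

theorem hasFDerivAt_q {y : V} (hy : 0 < q b y) :
    HasFDerivAt (q b) ((q b y)⁻¹ • transverseInner b y) y := by
  have hr : ‖y‖ ^ 2 - ⟪b, y⟫_ℝ ^ 2 ≠ 0 := (Real.sqrt_pos.mp hy).ne'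
  have hq : √(‖y‖ ^ 2 - ⟪b, y⟫_ℝ ^ 2) = q b y := rfl
  have hd :
      HasFDerivAt (fun x : V => ‖x‖ ^ 2 - ⟪b, x⟫_ℝ ^ 2) ((2 : ℝ) • transverseInner b y) y := by
    refine ((hasFDerivAt_id y).norm_sq.sub ((innerSL ℝ b).hasFDerivAt.pow 2)).congr_fderiv ?_
    ext w
    simp only [id_eq, ContinuousLinearMap.comp_id, coe_innerSL_apply, Nat.add_one_sub_one, pow_one,
      nsmul_eq_mul, Nat.cast_ofNat, sub_apply, smul_apply, smul_eq_mul, transverseInner_apply]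
    ring
  refine (hd.sqrt hr).congr_fderiv ?_
  ext w
  simp only [hq, one_div, mul_inv_rev, smul_apply, smul_eq_mul]
  field_simp

theorem hasFDerivAt_A {y : V} (hy : 0 < q b y) : HasFDerivAt (A b g) (beta b g y) y := by
  refine ((innerSL ℝ b).hasFDerivAt.add ((hasFDerivAt_q hy).const_mul (g / 2))).congr_fderiv ?_
  ext w
  simp only [beta, add_apply, coe_innerSL_apply, smul_apply, smul_eq_mul]
  ring

theorem B_eq_sq_add (y : V) :
    B b g y = (⟪b, y⟫_ℝ + g / 2 * q b y) ^ 2 + (1 - g ^ 2 / 4) * q b y ^ 2 := by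
  rw [B]; ring

theorem B_nonneg (hg : |g| ≤ 2) (y : V) : 0 ≤ B b g y := by
  have : g ^ 2 ≤ 4 := by nlinarith [abs_nonneg g, sq_abs g]
  rw [B_eq_sq_add]
  nlinarith [sq_nonneg (⟪b, y⟫_ℝ + g / 2 * q b y), sq_nonneg (q b y)]

theorem B_pos (hg : |g| < 2) {y : V} (hy : 0 < q b y) : 0 < B b g y := by
  have : g ^ 2 < 4 := by nlinarith [abs_nonneg g, sq_abs g]
  rw [B_eq_sq_add]
  nlinarith [sq_nonneg (⟪b, y⟫_ℝ + g / 2 * q b y), mul_pos hy hy]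

theorem hasFDerivAt_B {y : V} (hy : 0 < q b y) :
    HasFDerivAt (B b g) ((2 : ℝ) • innerSL ℝ (t b g y)) y := by
  have hp := (innerSL ℝ b).hasFDerivAt (x := y)
  have hq := hasFDerivAt_q hy
  refine (((hp.pow 2).add ((hp.const_mul g).mul hq)).add (hq.pow 2)).congr_fderiv ?_
  ext w
  simp only [t, coe_innerSL_apply, Nat.add_one_sub_one, pow_one, nsmul_eq_mul, Nat.cast_ofNat,
    add_apply, smul_apply, smul_eq_mul, smul_add, map_add, map_smul, transverseInner_apply,
    inner_v_left]
  field_simp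
  ring

theorem hasFDerivAt_sqrt_B (hg : |g| < 2) {y : V} (hy : 0 < q b y) :
    HasFDerivAt (fun x => √(B b g x)) (√(B b g y) • (B b g y)⁻¹ • innerSL ℝ (t b g y)) y := by
  have hB := B_pos hg hy
  refine ((hasFDerivAt_B hy).sqrt hB.ne').congr_fderiv ?_
  ext w
  have hs : √(B b g y) ^ 2 = B b g y := Real.sq_sqrt hB.le
  simp only [one_div, mul_inv_rev, smul_apply, coe_innerSL_apply, smul_eq_mul]
  field_simp
  rw [hs, mul_comm]

theorem N_comm (h : ℝ) (y z : V) : N b g h y z = N b g h z y := by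
  simp only [N, real_inner_comm y z]
  ring

theorem hasFDerivAt_N_left (h : ℝ) {y : V} (hy : 0 < q b y) (z : V) :
    HasFDerivAt (N b g h · z) (A b g z • beta b g y + h ^ 2 • transverseInner b z) y := by
  have hN : (N b g h · z) = fun x => A b g x * A b g z + h ^ 2 * transverseInner b z x := by
    ext x
    rw [N, transverseInner_apply, real_inner_comm x z, mul_comm ⟪b, x⟫_ℝ]
  rw [hN]
  refine (((hasFDerivAt_A hy).mul_const (A b g z)).add
    ((transverseInner b z).hasFDerivAt.const_mul (h ^ 2))).congr_fderiv ?_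
  ext w
  simp

theorem hasFDerivAt_N_right (h : ℝ) (y : V) {z : V} (hz : 0 < q b z) :
    HasFDerivAt (N b g h y) (A b g y • beta b g z + h ^ 2 • transverseInner b y) z := by
  rw [show N b g h y = (N b g h · y) from funext (N_comm h y)]
  exact hasFDerivAt_N_left h hz y

theorem hasFDerivAt_deriv_N_left (h : ℝ) (y : V) {z : V} (hz : 0 < q b z) :
    HasFDerivAt (fun x => A b g x • beta b g y + h ^ 2 • transverseInner b x)
      ((beta b g z).smulRight (beta b g y) + h ^ 2 • transverseInner b) z :=
  ((hasFDerivAt_A hz).smul_const _).add ((transverseInner b).hasFDerivAt.fun_const_smul _)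

end Finsleroid

theorem finsleroid_lambda_mixed_second_derivative_general
    {V : Type*} [NormedAddCommGroup V] [InnerProductSpace ℝ V]
    (b : V) (g h : ℝ) (hg : |g| < 2)
    (q A B : V → ℝ) (v t : V → V) (lam : V → V → ℝ)
    (hq : ∀ y : V, q y = Real.sqrt (‖y‖ ^ 2 - ⟪b, y⟫_ℝ ^ 2))
    (hv : ∀ y : V, v y = y - ⟪b, y⟫_ℝ • b)
    (hA : ∀ y : V, A y = ⟪b, y⟫_ℝ + (g / 2) * q y)
    (hB : ∀ y : V, B y = ⟪b, y⟫_ℝ ^ 2 + g * ⟪b, y⟫_ℝ * q y + q y ^ 2)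
    (ht : ∀ y : V, t y = y + (g / 2) • (q y • b + (⟪b, y⟫_ℝ / q y) • v y))
    (hlam : ∀ y₁ y₂ : V, y₁ ≠ 0 → y₂ ≠ 0 →
      lam y₁ y₂ = (A y₁ * A y₂ + h ^ 2 * (⟪y₁, y₂⟫_ℝ - ⟪b, y₁⟫_ℝ * ⟪b, y₂⟫_ℝ))
        / Real.sqrt (B y₁ * B y₂)) :
    ∀ y₁ y₂ : V, 0 < q y₁ → 0 < q y₂ → ∀ w₁ w₂ : V,
      (fderiv ℝ (fun z => fderiv ℝ (fun y => lam y z) y₁) y₂ w₂) w₁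
        = ((⟪b, w₁⟫_ℝ + (g / 2) * ⟪v y₁, w₁⟫_ℝ / q y₁)
              * (⟪b, w₂⟫_ℝ + (g / 2) * ⟪v y₂, w₂⟫_ℝ / q y₂)
            + h ^ 2 * (⟪w₁, w₂⟫_ℝ - ⟪b, w₁⟫_ℝ * ⟪b, w₂⟫_ℝ)) / Real.sqrt (B y₁ * B y₂)
          - ((⟪b, w₁⟫_ℝ + (g / 2) * ⟪v y₁, w₁⟫_ℝ / q y₁) * A y₂ + h ^ 2 * ⟪v y₂, w₁⟫_ℝ)
              * ⟪t y₂, w₂⟫_ℝ / (B y₂ * Real.sqrt (B y₁ * B y₂))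
          - (⟪t y₁, w₁⟫_ℝ / B y₁)
              * (((⟪b, w₂⟫_ℝ + (g / 2) * ⟪v y₂, w₂⟫_ℝ / q y₂) * A y₁
                    + h ^ 2 * ⟪v y₁, w₂⟫_ℝ) / Real.sqrt (B y₁ * B y₂)
                  - lam y₁ y₂ * ⟪t y₂, w₂⟫_ℝ / B y₂) := by
  intro y₁ y₂ hq₁ hq₂ w₁ w₂
  obtain rfl : q = Finsleroid.q b := funext hq
  obtain rfl : v = Finsleroid.v b := funext hv
  obtain rfl : A = Finsleroid.A b g := funext hA
  obtain rfl : B = Finsleroid.B b g := funext hB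
  obtain rfl : t = Finsleroid.t b g := funext ht
  have hlam_eq : ∀ y z : V, y ≠ 0 → z ≠ 0 →
      lam y z = Finsleroid.N b g h y z / (√(Finsleroid.B b g y) * √(Finsleroid.B b g z)) := by
    intro y z hy hz
    rw [hlam y z hy hz, Real.sqrt_mul (Finsleroid.B_nonneg hg.le y)]
    rfl
  have hB₁ := Finsleroid.B_pos hg hq₁
  have hB₂ := Finsleroid.B_pos hg hq₂
  rw [fderiv_fderiv_congr_of_eventually
      (f' := fun y z => Finsleroid.N b g h y z / (√(Finsleroid.B b g y) * √(Finsleroid.B b g z)))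
      ?_,
    fderiv_fderiv_div_mul_apply (Eventually.of_forall (Finsleroid.hasFDerivAt_N_left h hq₁))
      (Finsleroid.hasFDerivAt_deriv_N_left h y₁ hq₂) (Finsleroid.hasFDerivAt_N_right h y₁ hq₂)
      (Finsleroid.hasFDerivAt_sqrt_B hg hq₁) (Finsleroid.hasFDerivAt_sqrt_B hg hq₂)
      (Real.sqrt_pos.2 hB₁).ne' (Real.sqrt_pos.2 hB₂).ne',
    hlam_eq y₁ y₂ (Finsleroid.ne_zero_of_q_pos hq₁) (Finsleroid.ne_zero_of_q_pos hq₂),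
    Real.sqrt_mul hB₁.le]
  · simp only [add_apply, ContinuousLinearMap.smulRight_apply, smul_apply, smul_eq_mul,
      coe_innerSL_apply, Finsleroid.beta_apply, Finsleroid.transverseInner_apply,
      Finsleroid.inner_v_left, real_inner_comm w₂ w₁]
    field_simp
  · filter_upwards [eventually_ne_nhds (Finsleroid.ne_zero_of_q_pos hq₂)] with z hz
    filter_upwards [eventually_ne_nhds (Finsleroid.ne_zero_of_q_pos hq₁)] with y hy
    exact hlam_eq y z hy hz

/-- In the Finsleroid setting, for `y₁, y₂` with `q(y₁) > 0` and
`q(y₂) > 0`, the mixed second derivative of `λ` (first in the first argument, then in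
the second) at `(y₁, y₂)`, applied to directions `(w₁, w₂)`, equals the stated explicit
expression.  With `β_y(w) = ⟨b,w⟩ + (g/2)⟨v(y),w⟩/q(y)`, the mixed derivative applied
to `(w₁, w₂)` is encoded as
`(fderiv ℝ (fun z => fderiv ℝ (fun y => lam y z) y₁) y₂ w₂) w₁`. -/
theorem finsleroid_lambda_mixed_second_derivative
    {V : Type*} [NormedAddCommGroup V] [InnerProductSpace ℝ V] [FiniteDimensional ℝ V]
    (b : V) (hb : ‖b‖ = 1) (g h : ℝ) (hg : |g| < 2)
    (hh : h = Real.sqrt (1 - g ^ 2 / 4))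
    (q A B : V → ℝ) (v t : V → V) (lam : V → V → ℝ)
    (hq : ∀ y : V, q y = Real.sqrt (‖y‖ ^ 2 - ⟪b, y⟫_ℝ ^ 2))
    (hv : ∀ y : V, v y = y - ⟪b, y⟫_ℝ • b)
    (hA : ∀ y : V, A y = ⟪b, y⟫_ℝ + (g / 2) * q y)
    (hB : ∀ y : V, B y = ⟪b, y⟫_ℝ ^ 2 + g * ⟪b, y⟫_ℝ * q y + q y ^ 2)
    (ht : ∀ y : V, t y = y + (g / 2) • (q y • b + (⟪b, y⟫_ℝ / q y) • v y))
    (hlam : ∀ y₁ y₂ : V, y₁ ≠ 0 → y₂ ≠ 0 →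
      lam y₁ y₂ = (A y₁ * A y₂ + h ^ 2 * (⟪y₁, y₂⟫_ℝ - ⟪b, y₁⟫_ℝ * ⟪b, y₂⟫_ℝ))
        / Real.sqrt (B y₁ * B y₂)) :
    ∀ y₁ y₂ : V, 0 < q y₁ → 0 < q y₂ → ∀ w₁ w₂ : V,
      (fderiv ℝ (fun z => fderiv ℝ (fun y => lam y z) y₁) y₂ w₂) w₁
        = ((⟪b, w₁⟫_ℝ + (g / 2) * ⟪v y₁, w₁⟫_ℝ / q y₁)
              * (⟪b, w₂⟫_ℝ + (g / 2) * ⟪v y₂, w₂⟫_ℝ / q y₂)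
            + h ^ 2 * (⟪w₁, w₂⟫_ℝ - ⟪b, w₁⟫_ℝ * ⟪b, w₂⟫_ℝ)) / Real.sqrt (B y₁ * B y₂)
          - ((⟪b, w₁⟫_ℝ + (g / 2) * ⟪v y₁, w₁⟫_ℝ / q y₁) * A y₂ + h ^ 2 * ⟪v y₂, w₁⟫_ℝ)
              * ⟪t y₂, w₂⟫_ℝ / (B y₂ * Real.sqrt (B y₁ * B y₂))
          - (⟪t y₁, w₁⟫_ℝ / B y₁)
              * (((⟪b, w₂⟫_ℝ + (g / 2) * ⟪v y₂, w₂⟫_ℝ / q y₂) * A y₁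
                    + h ^ 2 * ⟪v y₁, w₂⟫_ℝ) / Real.sqrt (B y₁ * B y₂)
                  - lam y₁ y₂ * ⟪t y₂, w₂⟫_ℝ / B y₂) :=
  finsleroid_lambda_mixed_second_derivative_general b g h hg q A B v t lam hq hv hA hB ht hlam
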